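/- Let f be an L²-martingale with f ∈ BMO^α. Then for every n ≥ 1 and every A ∈ F_n, P(A)^{-1-2α} ∫_A Σ_{k=n}^∞ |d_k f|² dP ≤ C ‖f‖²_{BMO^α} for an absolute constant C. Consequently the measure |d_k f|² dP⊗dm is a bounded α-Carleson measure. -/

import Mathlib

open MeasureTheory ENNReal Set
open scoped Classical NNReal

noncomputable section

/-- Convention `f_{-1} = 0`: the value `f_{n-1}`. -/
def predVal {Ω : Type*} (f : ℕ → Ω → ℝ) (n : ℕ) (ω : Ω) : ℝ :=
  if n = 0 then 0 else f (n - 1) ω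

/-- Martingale difference `d_k f` (with `f_{-1} = 0`). -/
def mdiff {Ω : Type*} (f : ℕ → Ω → ℝ) (k : ℕ) (ω : Ω) : ℝ :=
  if k = 0 then f 0 ω else f k ω - f (k - 1) ω

/-- The `BMO^α` norm of the martingale `f` with final value `g`:
`sup_n sup_{A ∈ F_n} P(A)^{-1/2-α} (∫_A |g - f_{n-1}|² dP)^{1/2}`. -/
def bmoNorm {Ω : Type*} {m0 : MeasurableSpace Ω} (μ : Measure Ω)
    (ℱ : Filtration ℕ m0) (α : ℝ) (f : ℕ → Ω → ℝ) (g : Ω → ℝ) : ℝ≥0∞ :=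
  ⨆ (n : ℕ) (A : Set Ω) (_ : MeasurableSet[ℱ n] A),
    (∫⁻ ω in A, (‖g ω - predVal f n ω‖₊ : ℝ≥0∞) ^ 2 ∂μ) ^ (1/2 : ℝ)
      / μ A ^ (1/2 + α : ℝ)

/-- Stopping time with values in `ℕ ∪ {∞}`. -/
def IsStopTime {Ω : Type*} {m0 : MeasurableSpace Ω} (ℱ : Filtration ℕ m0)
    (τ : Ω → ℕ∞) : Prop :=
  ∀ n : ℕ, MeasurableSet[ℱ n] {ω | τ ω ≤ (n : ℕ∞)}

/-- Mass of the tent over `τ` for the measure `w_k dP ⊗ dm`: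
`∫_Ω Σ_{k ≥ τ} w_k 1_{τ < ∞} dP`. -/
def tentMass {Ω : Type*} [MeasurableSpace Ω] (μ : Measure Ω)
    (w : ℕ → Ω → ℝ≥0∞) (τ : Ω → ℕ∞) : ℝ≥0∞ :=
  ∫⁻ ω, ∑' k : ℕ, if τ ω ≤ (k : ℕ∞) ∧ τ ω < ⊤ then w k ω else 0 ∂μ

/-- The `α`-Carleson norm of the measure `w_k dP ⊗ dm`:
`sup_τ μ(τ̂)/P(τ<∞)^{1+2α}`. -/
def carlesonNorm {Ω : Type*} {m0 : MeasurableSpace Ω} (μ : Measure Ω)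
    (ℱ : Filtration ℕ m0) (α : ℝ) (w : ℕ → Ω → ℝ≥0∞) : ℝ≥0∞ :=
  ⨆ (τ : Ω → ℕ∞) (_ : IsStopTime ℱ τ),
    tentMass μ w τ / μ {ω | τ ω < ⊤} ^ (1 + 2*α : ℝ)

/-! On a set `A ∈ ℱ n`, the increments of an `L²`-martingale are orthogonal, because the pull-out
property kills every cross term: `∫_A ∑_{k=n}^m |d_k f|² = ∫_A |f_m - f_{n-1}|²`, and likewise
`∫_A |g - f_{n-1}|² = ∫_A |f_m - f_{n-1}|² + ∫_A |g - f_m|²`. Hence the tail square function over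
`A` is bounded by the `BMO^α` quantity itself, giving the Carleson estimate on sets with `C = 1`.
For a stopping time `τ`, the tent splits into the pieces over `{τ = n} ∈ ℱ n`, and
`P(τ = n)^{1+2α} ≤ P(τ = n) P(τ < ∞)^{2α}` sums to `P(τ < ∞)^{1+2α}`. -/

section Pythagoras

variable {Ω : Type*} {m m0 : MeasurableSpace Ω} {μ : Measure Ω} [IsFiniteMeasure μ]
  {A : Set Ω} {φ h ψ : Ω → ℝ}

theorem setIntegral_mul_sub_condExp_eq_zero (hm : m ≤ m0) (hA : MeasurableSet[m] A)
    (hφm : StronglyMeasurable[m] φ) (hφ : MemLp φ 2 μ) (hh : MemLp h 2 μ)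
    (hψ : ψ =ᵐ[μ] μ[h|m]) :
    ∫ ω in A, φ ω * (h ω - ψ ω) ∂μ = 0 := by
  have hφh : Integrable (fun ω => φ ω * h ω) μ := hφ.integrable_mul hh
  have hφψ : Integrable (fun ω => φ ω * ψ ω) μ :=
    hφ.integrable_mul ((hh.condExp one_le_two).ae_eq hψ.symm)
  have pull_out : ∫ ω in A, φ ω * ψ ω ∂μ = ∫ ω in A, φ ω * h ω ∂μ := calc
    ∫ ω in A, φ ω * ψ ω ∂μ = ∫ ω in A, μ[φ * h|m] ω ∂μ := by
      refine setIntegral_congr_ae (hm A hA) ?_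
      filter_upwards [hψ, condExp_mul_of_stronglyMeasurable_left hφm hφh
        (hh.integrable one_le_two)] with ω hψω hω _
      rw [hω, hψω, Pi.mul_apply]
    _ = ∫ ω in A, φ ω * h ω ∂μ := setIntegral_condExp hm hφh hA
  simp_rw [mul_sub]
  rw [integral_sub hφh.integrableOn hφψ.integrableOn, pull_out, sub_self]

theorem setIntegral_sq_add_sub_condExp (hm : m ≤ m0) (hA : MeasurableSet[m] A)
    (hφm : StronglyMeasurable[m] φ) (hφ : MemLp φ 2 μ) (hh : MemLp h 2 μ)
    (hψ : ψ =ᵐ[μ] μ[h|m]) :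
    ∫ ω in A, (φ ω + (h ω - ψ ω)) ^ 2 ∂μ
      = ∫ ω in A, φ ω ^ 2 ∂μ + ∫ ω in A, (h ω - ψ ω) ^ 2 ∂μ := by
  have hr : MemLp (fun ω => h ω - ψ ω) 2 μ :=
    hh.sub ((hh.condExp one_le_two).ae_eq hψ.symm)
  have hsq : Integrable (fun ω => φ ω ^ 2 + (h ω - ψ ω) ^ 2) (μ.restrict A) :=
    hφ.integrable_sq.integrableOn.add hr.integrable_sq.integrableOn
  have hcross : Integrable (fun ω => 2 * (φ ω * (h ω - ψ ω))) (μ.restrict A) :=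
    ((hφ.integrable_mul hr).const_mul 2).integrableOn
  calc ∫ ω in A, (φ ω + (h ω - ψ ω)) ^ 2 ∂μ
      = ∫ ω in A, (φ ω ^ 2 + (h ω - ψ ω) ^ 2 + 2 * (φ ω * (h ω - ψ ω))) ∂μ := by
        congr 1; ext ω; ring
    _ = ∫ ω in A, φ ω ^ 2 ∂μ + ∫ ω in A, (h ω - ψ ω) ^ 2 ∂μ := by
        rw [integral_add hsq hcross,
          integral_add hφ.integrable_sq.integrableOn hr.integrable_sq.integrableOn,
          integral_const_mul, setIntegral_mul_sub_condExp_eq_zero hm hA hφm hφ hh hψ,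
          mul_zero, add_zero]

end Pythagoras

section Martingale

variable {Ω : Type*} {m0 : MeasurableSpace Ω} {μ : Measure Ω} {ℱ : Filtration ℕ m0}
  {f : ℕ → Ω → ℝ} {n m : ℕ} {A : Set Ω}

theorem predVal_zero (f : ℕ → Ω → ℝ) : predVal f 0 = 0 := by
  funext ω; simp [predVal]

theorem predVal_succ (f : ℕ → Ω → ℝ) (k : ℕ) : predVal f (k + 1) = f k := by
  funext ω; simp [predVal]

theorem mdiff_eq_sub_predVal (f : ℕ → Ω → ℝ) (k : ℕ) :
    mdiff f k = fun ω => f k ω - predVal f k ω := by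
  funext ω; cases k <;> simp [mdiff, predVal]

theorem memLp_predVal (hf2 : ∀ n, MemLp (f n) 2 μ) (n : ℕ) : MemLp (predVal f n) 2 μ := by
  cases n with
  | zero => rw [predVal_zero]; exact MemLp.zero
  | succ k => rw [predVal_succ]; exact hf2 k

theorem stronglyMeasurable_predVal (hf : StronglyAdapted ℱ f)
    (hnm : n ≤ m + 1) : StronglyMeasurable[ℱ m] (predVal f n) := by
  cases n with
  | zero => rw [predVal_zero]; exact stronglyMeasurable_zero
  | succ k => rw [predVal_succ]; exact (hf k).mono (ℱ.mono (by omega))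

theorem stronglyMeasurable_mdiff (hf : StronglyAdapted ℱ f) (k : ℕ) :
    StronglyMeasurable[ℱ k] (mdiff f k) := by
  rw [mdiff_eq_sub_predVal]
  exact (hf k).sub (stronglyMeasurable_predVal hf k.le_succ)

theorem memLp_mdiff (hf2 : ∀ n, MemLp (f n) 2 μ) (k : ℕ) : MemLp (mdiff f k) 2 μ := by
  rw [mdiff_eq_sub_predVal]; exact (hf2 k).sub (memLp_predVal hf2 k)

variable [IsFiniteMeasure μ]

theorem setIntegral_sq_sub_predVal (hf : StronglyAdapted ℱ f)
    (hf2 : ∀ n, MemLp (f n) 2 μ) (hnm : n ≤ m) (hA : MeasurableSet[ℱ n] A) {h : Ω → ℝ}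
    (hh : MemLp h 2 μ) (hfh : f m =ᵐ[μ] μ[h|ℱ m]) :
    ∫ ω in A, (h ω - predVal f n ω) ^ 2 ∂μ
      = ∫ ω in A, (f m ω - predVal f n ω) ^ 2 ∂μ + ∫ ω in A, (h ω - f m ω) ^ 2 ∂μ := by
  have hpyth := setIntegral_sq_add_sub_condExp (ℱ.le m) (ℱ.mono hnm A hA)
    ((hf m).sub (stronglyMeasurable_predVal hf (by omega)))
    ((hf2 m).sub (memLp_predVal hf2 n)) hh hfh
  simp only [Pi.sub_apply] at hpyth
  rw [← hpyth]
  congr 1; ext ω; ring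

theorem sum_setIntegral_mdiff_sq (hf : Martingale f ℱ μ)
    (hf2 : ∀ n, MemLp (f n) 2 μ) (hA : MeasurableSet[ℱ n] A) (hnm : n ≤ m) :
    ∑ k ∈ Finset.Icc n m, ∫ ω in A, mdiff f k ω ^ 2 ∂μ
      = ∫ ω in A, (f m ω - predVal f n ω) ^ 2 ∂μ := by
  induction m, hnm using Nat.le_induction with
  | base => simp [mdiff_eq_sub_predVal]
  | succ m hnm ih =>
    rw [Finset.sum_Icc_succ_top (by omega), ih,
      setIntegral_sq_sub_predVal hf.stronglyAdapted hf2 hnm hA (hf2 (m + 1))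
        (hf.condExp_ae_eq m.le_succ).symm,
      mdiff_eq_sub_predVal, predVal_succ]

end Martingale

section BMO

variable {Ω : Type*} {m0 : MeasurableSpace Ω} {μ : Measure Ω}
  {ℱ : Filtration ℕ m0} {f : ℕ → Ω → ℝ} {g : Ω → ℝ} {n : ℕ} {A : Set Ω}

theorem setLIntegral_nnnorm_sq_eq_ofReal {q : Ω → ℝ} (hq : MemLp q 2 μ) (A : Set Ω) :
    ∫⁻ ω in A, (‖q ω‖₊ : ℝ≥0∞) ^ 2 ∂μ = ENNReal.ofReal (∫ ω in A, q ω ^ 2 ∂μ) := by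
  have hpt : ∀ ω, (‖q ω‖₊ : ℝ≥0∞) ^ 2 = ENNReal.ofReal (q ω ^ 2) := fun ω => by
    rw [← enorm_eq_nnnorm, Real.enorm_eq_ofReal_abs, ← ENNReal.ofReal_pow (abs_nonneg _), sq_abs]
  rw [lintegral_congr hpt, ofReal_integral_eq_lintegral_ofReal hq.integrable_sq.integrableOn
    (Filter.Eventually.of_forall fun ω => sq_nonneg _)]

variable [IsFiniteMeasure μ]

theorem sum_setIntegral_mdiff_sq_le (hf : Martingale f ℱ μ) (hg : MemLp g 2 μ)
    (hfg : ∀ n, f n =ᵐ[μ] μ[g|ℱ n]) (hA : MeasurableSet[ℱ n] A) {m : ℕ} (hnm : n ≤ m) :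
    ∑ k ∈ Finset.Icc n m, ∫ ω in A, mdiff f k ω ^ 2 ∂μ
      ≤ ∫ ω in A, (g ω - predVal f n ω) ^ 2 ∂μ := by
  have hf2 : ∀ n, MemLp (f n) 2 μ := fun n => (hg.condExp one_le_two).ae_eq (hfg n).symm
  rw [sum_setIntegral_mdiff_sq hf hf2 hA hnm,
    setIntegral_sq_sub_predVal hf.stronglyAdapted hf2 hnm hA hg (hfg m)]
  exact le_add_of_nonneg_right (integral_nonneg fun ω => sq_nonneg _)

theorem setLIntegral_tsum_mdiff_sq_le (hf : Martingale f ℱ μ) (hg : MemLp g 2 μ)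
    (hfg : ∀ n, f n =ᵐ[μ] μ[g|ℱ n]) (hA : MeasurableSet[ℱ n] A) :
    ∫⁻ ω in A, ∑' k : ℕ, (if n ≤ k then (‖mdiff f k ω‖₊ : ℝ≥0∞) ^ 2 else 0) ∂μ
      ≤ ∫⁻ ω in A, (‖g ω - predVal f n ω‖₊ : ℝ≥0∞) ^ 2 ∂μ := by
  have hf2 : ∀ n, MemLp (f n) 2 μ := fun n => (hg.condExp one_le_two).ae_eq (hfg n).symm
  have hd : ∀ k, Measurable fun ω => (‖mdiff f k ω‖₊ : ℝ≥0∞) ^ 2 := fun k =>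
    (((stronglyMeasurable_mdiff hf.stronglyAdapted k).mono (ℱ.le k)).measurable.nnnorm
      |>.coe_nnreal_ennreal).pow_const 2
  rw [lintegral_tsum fun k => by split_ifs; exacts [(hd k).aemeasurable, aemeasurable_const],
    setLIntegral_nnnorm_sq_eq_ofReal (q := fun ω => g ω - predVal f n ω)
      (hg.sub (memLp_predVal hf2 n))]
  refine ENNReal.tsum_le_of_sum_range_le fun M => ?_
  calc ∑ k ∈ Finset.range M, ∫⁻ ω in A, (if n ≤ k then (‖mdiff f k ω‖₊ : ℝ≥0∞) ^ 2 else 0) ∂μ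
      = ∑ k ∈ Finset.range M with n ≤ k, ∫⁻ ω in A, (‖mdiff f k ω‖₊ : ℝ≥0∞) ^ 2 ∂μ := by
        rw [Finset.sum_filter]
        exact Finset.sum_congr rfl fun k _ => by split_ifs <;> simp
    _ ≤ ∑ k ∈ Finset.Icc n (n + M), ∫⁻ ω in A, (‖mdiff f k ω‖₊ : ℝ≥0∞) ^ 2 ∂μ :=
        Finset.sum_le_sum_of_subset fun k hk => by
          simp only [Finset.mem_filter, Finset.mem_range, Finset.mem_Icc] at hk ⊢; omega
    _ = ENNReal.ofReal (∑ k ∈ Finset.Icc n (n + M), ∫ ω in A, mdiff f k ω ^ 2 ∂μ) := by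
        rw [ENNReal.ofReal_sum_of_nonneg fun k _ => integral_nonneg fun ω => sq_nonneg _]
        exact Finset.sum_congr rfl fun k _ =>
          setLIntegral_nnnorm_sq_eq_ofReal (memLp_mdiff hf2 k) A
    _ ≤ ENNReal.ofReal (∫ ω in A, (g ω - predVal f n ω) ^ 2 ∂μ) :=
        ENNReal.ofReal_le_ofReal (sum_setIntegral_mdiff_sq_le hf hg hfg hA (by omega))

theorem setLIntegral_sq_le_bmoNorm_sq_mul (α : ℝ) (f : ℕ → Ω → ℝ) (g : Ω → ℝ)
    (hA : MeasurableSet[ℱ n] A) :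
    ∫⁻ ω in A, (‖g ω - predVal f n ω‖₊ : ℝ≥0∞) ^ 2 ∂μ
      ≤ bmoNorm μ ℱ α f g ^ 2 * μ A ^ (1 + 2 * α) := by
  set I := ∫⁻ ω in A, (‖g ω - predVal f n ω‖₊ : ℝ≥0∞) ^ 2 ∂μ
  by_cases hA0 : μ A = 0
  · simp [I, Measure.restrict_eq_zero.mpr hA0]
  have hAt : μ A ≠ ⊤ := measure_ne_top μ A
  have hI : I ^ (1 / 2 : ℝ) ≤ bmoNorm μ ℱ α f g * μ A ^ (1 / 2 + α) := by
    rw [← ENNReal.div_le_iff (by simp [hA0, hAt]) (by simp [hA0, hAt])]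
    exact le_iSup_of_le n (le_iSup_of_le A (le_iSup_of_le hA le_rfl))
  calc I = (I ^ (1 / 2 : ℝ)) ^ (2 : ℝ) := by rw [← ENNReal.rpow_mul]; norm_num
    _ ≤ (bmoNorm μ ℱ α f g * μ A ^ (1 / 2 + α)) ^ (2 : ℝ) := by gcongr
    _ = bmoNorm μ ℱ α f g ^ 2 * μ A ^ (1 + 2 * α) := by
        rw [ENNReal.mul_rpow_of_nonneg _ _ zero_le_two, ENNReal.rpow_two, ← ENNReal.rpow_mul]
        ring_nf

theorem setLIntegral_tsum_mdiff_sq_le_bmoNorm (hf : Martingale f ℱ μ) (hg : MemLp g 2 μ)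
    (hfg : ∀ n, f n =ᵐ[μ] μ[g|ℱ n]) (α : ℝ) (hA : MeasurableSet[ℱ n] A) :
    ∫⁻ ω in A, ∑' k : ℕ, (if n ≤ k then (‖mdiff f k ω‖₊ : ℝ≥0∞) ^ 2 else 0) ∂μ
      ≤ bmoNorm μ ℱ α f g ^ 2 * μ A ^ (1 + 2 * α) :=
  (setLIntegral_tsum_mdiff_sq_le hf hg hfg hA).trans (setLIntegral_sq_le_bmoNorm_sq_mul α f g hA)

end BMO

section Carleson

variable {Ω : Type*} {m0 : MeasurableSpace Ω}

theorem iUnion_setOf_eq_natCast (τ : Ω → ℕ∞) :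
    ⋃ n : ℕ, {ω | τ ω = n} = {ω | τ ω < ⊤} := by
  ext ω; simp [lt_top_iff_ne_top, ENat.ne_top_iff_exists, eq_comm]

theorem pairwise_disjoint_setOf_eq_natCast (τ : Ω → ℕ∞) :
    Pairwise (Function.onFun Disjoint fun n : ℕ => {ω | τ ω = n}) := fun _ _ hij =>
  pairwise_disjoint_fiber τ (Nat.cast_injective.ne hij)

theorem IsStopTime.measurableSet_eq {ℱ : Filtration ℕ m0} {τ : Ω → ℕ∞}
    (hτ : IsStopTime ℱ τ) (n : ℕ) : MeasurableSet[ℱ n] {ω | τ ω = n} := by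
  cases n with
  | zero => simpa using hτ 0
  | succ k =>
    have hset : {ω | τ ω = ↑(k + 1)} = {ω | τ ω ≤ ↑(k + 1)} \ {ω | τ ω ≤ k} := by
      ext ω
      simp only [mem_sdiff, mem_ofPred_eq, not_le]
      generalize τ ω = t
      induction t using ENat.recTopCoe with
      | top => simpa using (ENat.natCast_ne_top (k + 1)).symm
      | coe t => norm_cast; omega
    rw [hset]
    exact (hτ (k + 1)).diff (ℱ.mono k.le_succ _ (hτ k))

theorem tentMass_eq_tsum_setLIntegral (μ : Measure Ω) (w : ℕ → Ω → ℝ≥0∞) {τ : Ω → ℕ∞}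
    (hτ : ∀ n : ℕ, MeasurableSet {ω | τ ω = n}) :
    tentMass μ w τ
      = ∑' n : ℕ, ∫⁻ ω in {ω | τ ω = n}, ∑' k : ℕ, (if n ≤ k then w k ω else 0) ∂μ := by
  have hsupp : (fun ω => ∑' k : ℕ, if τ ω ≤ k ∧ τ ω < ⊤ then w k ω else 0).support
      ⊆ ⋃ n : ℕ, {ω | τ ω = n} := by
    intro ω hω
    rw [iUnion_setOf_eq_natCast]
    by_contra hτω
    exact hω (by simp [show ¬τ ω < ⊤ from hτω])
  rw [tentMass, ← setLIntegral_eq_of_support_subset hsupp,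
    lintegral_iUnion hτ (pairwise_disjoint_setOf_eq_natCast τ)]
  refine tsum_congr fun n => setLIntegral_congr_fun (hτ n) fun ω (hω : τ ω = n) => ?_
  simp [hω]

end Carleson

theorem tentMass_mdiff_sq_le_bmoNorm {Ω : Type*} {m0 : MeasurableSpace Ω} {μ : Measure Ω}
    [IsFiniteMeasure μ] {ℱ : Filtration ℕ m0} {f : ℕ → Ω → ℝ} {g : Ω → ℝ}
    (hf : Martingale f ℱ μ) (hg : MemLp g 2 μ) (hfg : ∀ n, f n =ᵐ[μ] μ[g|ℱ n])
    {α : ℝ} (hα : 0 ≤ α) {τ : Ω → ℕ∞} (hτ : IsStopTime ℱ τ) :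
    tentMass μ (fun k ω => (‖mdiff f k ω‖₊ : ℝ≥0∞) ^ 2) τ
      ≤ bmoNorm μ ℱ α f g ^ 2 * μ {ω | τ ω < ⊤} ^ (1 + 2 * α) := by
  set E : ℕ → Set Ω := fun n => {ω | τ ω = n}
  set S : Set Ω := {ω | τ ω < ⊤}
  set N := bmoNorm μ ℱ α f g
  have hE : ∀ n, MeasurableSet (E n) := fun n => ℱ.le n _ (hτ.measurableSet_eq n)
  have hES : ∀ n, E n ⊆ S := fun n ω (hω : τ ω = n) =>
    show τ ω < ⊤ from hω ▸ ENat.natCast_lt_top n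
  calc tentMass μ (fun k ω => (‖mdiff f k ω‖₊ : ℝ≥0∞) ^ 2) τ
      = ∑' n : ℕ, ∫⁻ ω in E n,
          ∑' k : ℕ, (if n ≤ k then (‖mdiff f k ω‖₊ : ℝ≥0∞) ^ 2 else 0) ∂μ :=
        tentMass_eq_tsum_setLIntegral μ _ hE
    _ ≤ ∑' n : ℕ, N ^ 2 * μ (E n) ^ (1 + 2 * α) := ENNReal.tsum_le_tsum fun n =>
        setLIntegral_tsum_mdiff_sq_le_bmoNorm hf hg hfg α (hτ.measurableSet_eq n)
    _ ≤ ∑' n : ℕ, N ^ 2 * (μ S ^ (2 * α) * μ (E n)) := by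
        refine ENNReal.tsum_le_tsum fun n => mul_le_mul_right ?_ _
        rw [ENNReal.rpow_add_of_nonneg _ _ zero_le_one (by positivity), ENNReal.rpow_one,
          mul_comm]
        gcongr
        exact hES n
    _ = N ^ 2 * μ S ^ (1 + 2 * α) := by
        rw [ENNReal.tsum_mul_left, ENNReal.tsum_mul_left,
          ← measure_iUnion (pairwise_disjoint_setOf_eq_natCast τ) hE, iUnion_setOf_eq_natCast,
          ENNReal.rpow_add_of_nonneg _ _ zero_le_one (by positivity), ENNReal.rpow_one,
          mul_comm (μ S)]

/-- if `f ∈ BMO^α`, then for every `n ≥ 1` and `A ∈ F_n`,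
`P(A)^{-1-2α} ∫_A Σ_{k=n}^∞ |d_k f|² dP ≤ C ‖f‖²_{BMO^α}` (absolute constant `C`),
and consequently `|d_k f|² dP ⊗ dm` is a bounded `α`-Carleson measure. -/
theorem stmt3 :
    ∃ C : ℝ≥0∞, 0 < C ∧ C < ⊤ ∧
      ∀ {Ω : Type} {m0 : MeasurableSpace Ω} (μ : Measure Ω)
        [IsProbabilityMeasure μ] (ℱ : Filtration ℕ m0)
        (α : ℝ), 0 ≤ α → α ≤ 1 →
        ∀ (f : ℕ → Ω → ℝ) (g : Ω → ℝ), Martingale f ℱ μ → MemLp g 2 μ →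
          (∀ n, f n =ᵐ[μ] μ[g | ℱ n]) →
          bmoNorm μ ℱ α f g < ⊤ →
          (∀ n : ℕ, 1 ≤ n → ∀ A : Set Ω, MeasurableSet[ℱ n] A →
            (∫⁻ ω in A, ∑' k : ℕ, (if n ≤ k then (‖mdiff f k ω‖₊ : ℝ≥0∞) ^ 2 else 0) ∂μ)
              ≤ C * bmoNorm μ ℱ α f g ^ 2 * μ A ^ (1 + 2*α : ℝ)) ∧
          carlesonNorm μ ℱ α (fun k ω => (‖mdiff f k ω‖₊ : ℝ≥0∞) ^ 2)
            ≤ C * bmoNorm μ ℱ α f g ^ 2 := by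
  refine ⟨1, zero_lt_one, ENNReal.one_lt_top, ?_⟩
  intro Ω m0 μ _ ℱ α hα _ f g hf hg hfg _
  simp only [one_mul]
  exact ⟨fun n _ A hA => setLIntegral_tsum_mdiff_sq_le_bmoNorm hf hg hfg α hA,
    iSup₂_le fun τ hτ =>
      ENNReal.div_le_of_le_mul (tentMass_mdiff_sq_le_bmoNorm hf hg hfg hα hτ)⟩
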